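/- If ξ = (E, B, F, p) is a fibre bundle, then the projection p : E → B is a weak fibration, i.e., it has the homotopy lifting property with respect to all disks Dⁿ, n ≥ 0. -/

import Mathlib

/-!
STATEMENT 2: If `ξ = (E, B, F, p)` is a fibre bundle, then `p : E → B` is a weak
(Serre) fibration: it has the homotopy lifting property with respect to all disks `Dⁿ`.
-/

open unitInterval ContinuousMap

universe u

noncomputable section

/-- Homotopy lifting property of `p` with respect to `Y`. -/
def HasHLP {E B : Type*} [TopologicalSpace E] [TopologicalSpace B]
    (p : C(E, B)) (Y : Type*) [TopologicalSpace Y] : Prop :=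
  ∀ (f : C(Y, E)) (h : C(Y × unitInterval, B)),
    (∀ y, h (y, 0) = p (f y)) →
    ∃ h' : C(Y × unitInterval, E),
      (∀ z, p (h' z) = h z) ∧ (∀ y, h' (y, 0) = f y)

/-- `p : E → B` is the projection of a fibre bundle with fibre `F`. -/
def IsFibreBundleProj (F : Type*) [TopologicalSpace F] {E B : Type*}
    [TopologicalSpace E] [TopologicalSpace B] (p : C(E, B)) : Prop :=
  ∀ b : B, ∃ U : Set B, IsOpen U ∧ b ∈ U ∧
    ∃ φ : (U × F) ≃ₜ (p ⁻¹' U : Set E), ∀ (u : U) (x : F), p (φ (u, x)) = (u : B)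

/-- The closed `n`-disk `Dⁿ`. -/
abbrev Disk (n : ℕ) := (Metric.closedBall (0 : EuclideanSpace ℝ (Fin n)) 1 : Set _)

section
open Set
open scoped Classical

theorem continuous_of_isClosed_cover {X Y : Type*} [TopologicalSpace X] [TopologicalSpace Y]
    {A₁ A₂ : Set X} (h1 : IsClosed A₁) (h2 : IsClosed A₂) (hU : A₁ ∪ A₂ = Set.univ)
    {f : X → Y} (c1 : ContinuousOn f A₁) (c2 : ContinuousOn f A₂) : Continuous f := by
  rw [continuous_iff_isClosed]
  intro C hC
  have : f ⁻¹' C = (A₁ ∩ f ⁻¹' C) ∪ (A₂ ∩ f ⁻¹' C) := by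
    rw [← Set.union_inter_distrib_right, hU, Set.univ_inter]
  rw [this]
  exact (c1.preimage_isClosed_of_isClosed h1 hC).union (c2.preimage_isClosed_of_isClosed h2 hC)

section
variable {E B F : Type*} [TopologicalSpace E] [TopologicalSpace B] [TopologicalSpace F]

def Triv (F : Type*) [TopologicalSpace F] {E B : Type*} [TopologicalSpace E]
    [TopologicalSpace B] (p : C(E, B)) (s : Set B) : Prop :=
  ∃ φ : (s × F) ≃ₜ (p ⁻¹' s : Set E), ∀ (u : s) (x : F), p (φ (u, x)) = (u : B)

theorem Triv.key {p : C(E, B)} {s : Set B} {φ : (s × F) ≃ₜ (p ⁻¹' s : Set E)}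
    (hφ : ∀ (u : s) (x : F), p (φ (u, x)) = (u : B)) (e : (p ⁻¹' s : Set E)) :
    ((φ.symm e).1 : B) = p e := by
  conv_rhs => rw [← φ.apply_symm_apply e]
  exact (hφ (φ.symm e).1 (φ.symm e).2).symm

theorem Triv.re {p : C(E, B)} {s : Set B} {φ : (s × F) ≃ₜ (p ⁻¹' s : Set E)}
    (hφ : ∀ (u : s) (x : F), p (φ (u, x)) = (u : B)) (e : (p ⁻¹' s : Set E))
    (hw : p (e : E) ∈ s) : φ (⟨p e, hw⟩, (φ.symm e).2) = e := by
  have h1 : (⟨p e, hw⟩ : s) = (φ.symm e).1 := Subtype.ext (Triv.key hφ e).symm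
  rw [h1]
  exact φ.apply_symm_apply e

theorem Triv.mono {p : C(E, B)} {s t : Set B} (h : Triv F p s) (hts : t ⊆ s) :
    Triv F p t := by
  obtain ⟨φ, hφ⟩ := h
  refine ⟨⟨⟨fun z => ⟨(φ (⟨z.1.1, hts z.1.2⟩, z.2) : E), by
      rw [mem_preimage, hφ]; exact z.1.2⟩,
    fun e => (⟨p e, e.2⟩, (φ.symm ⟨e.1, preimage_mono hts e.2⟩).2), ?_, ?_⟩, ?_, ?_⟩, ?_⟩
  · rintro ⟨u, x⟩
    refine Prod.ext (Subtype.ext ?_) ?_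
    · exact hφ _ _
    · have h1 : (⟨(φ (⟨u.1, hts u.2⟩, x) : E), preimage_mono hts
          (by rw [mem_preimage, hφ]; exact u.2)⟩ : (p ⁻¹' s : Set E))
          = φ (⟨u.1, hts u.2⟩, x) := Subtype.ext rfl
      simp only [h1, φ.symm_apply_apply]
  · intro e
    refine Subtype.ext ?_
    show (φ (⟨p (e:E), hts e.2⟩, (φ.symm ⟨e.1, preimage_mono hts e.2⟩).2) : E) = (e : E)
    exact congrArg Subtype.val (Triv.re hφ ⟨e.1, preimage_mono hts e.2⟩ (hts e.2))
  · exact Continuous.subtype_mk (continuous_subtype_val.comp (φ.continuous.comp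
      ((((continuous_subtype_val.comp continuous_fst).subtype_mk _)).prodMk continuous_snd))) _
  · refine Continuous.prodMk (Continuous.subtype_mk ((map_continuous p).comp continuous_subtype_val) _) ?_
    exact continuous_snd.comp (φ.symm.continuous.comp (Continuous.subtype_mk continuous_subtype_val _))
  · intro u x; exact hφ _ _

variable {p : C(E, B)} {s t : Set B}

/-- transition: fiber coordinate w.r.t. `ψ` of a `φ`-trivialized point over `s ∩ t`. -/
def gT (φ : (s × F) ≃ₜ (p ⁻¹' s : Set E)) (ψ : (t × F) ≃ₜ (p ⁻¹' t : Set E))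
    (hφ : ∀ (u : s) (x : F), p (φ (u, x)) = (u : B)) : ((s ∩ t : Set B) × F) → F := fun z =>
  (ψ.symm ⟨(φ (⟨z.1.1, z.1.2.1⟩, z.2) : E), by
    rw [mem_preimage, hφ]; exact z.1.2.2⟩).2

def gS (φ : (s × F) ≃ₜ (p ⁻¹' s : Set E)) (ψ : (t × F) ≃ₜ (p ⁻¹' t : Set E))
    (hψ : ∀ (u : t) (x : F), p (ψ (u, x)) = (u : B)) : ((s ∩ t : Set B) × F) → F := fun z =>
  (φ.symm ⟨(ψ (⟨z.1.1, z.1.2.2⟩, z.2) : E), by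
    rw [mem_preimage, hψ]; exact z.1.2.1⟩).2

theorem gT_cont (φ : (s × F) ≃ₜ (p ⁻¹' s : Set E)) (ψ : (t × F) ≃ₜ (p ⁻¹' t : Set E))
    (hφ : ∀ (u : s) (x : F), p (φ (u, x)) = (u : B)) : Continuous (gT φ ψ hφ) :=
  continuous_snd.comp (ψ.symm.continuous.comp (Continuous.subtype_mk
    (continuous_subtype_val.comp (φ.continuous.comp
      (((continuous_subtype_val.comp continuous_fst).subtype_mk _).prodMk continuous_snd))) _))

theorem gS_cont (φ : (s × F) ≃ₜ (p ⁻¹' s : Set E)) (ψ : (t × F) ≃ₜ (p ⁻¹' t : Set E))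
    (hψ : ∀ (u : t) (x : F), p (ψ (u, x)) = (u : B)) : Continuous (gS φ ψ hψ) :=
  continuous_snd.comp (φ.symm.continuous.comp (Continuous.subtype_mk
    (continuous_subtype_val.comp (ψ.continuous.comp
      (((continuous_subtype_val.comp continuous_fst).subtype_mk _).prodMk continuous_snd))) _))

theorem gT_main (φ : (s × F) ≃ₜ (p ⁻¹' s : Set E)) (ψ : (t × F) ≃ₜ (p ⁻¹' t : Set E))
    (hφ : ∀ (u : s) (x : F), p (φ (u, x)) = (u : B))
    (hψ : ∀ (u : t) (x : F), p (ψ (u, x)) = (u : B))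
    (w : B) (hw : w ∈ s ∩ t) (x : F) :
    (ψ (⟨w, hw.2⟩, gT φ ψ hφ (⟨w, hw⟩, x)) : E) = (φ (⟨w, hw.1⟩, x) : E) := by
  have h0 : p ((φ (⟨w, hw.1⟩, x) : E)) = w := hφ _ _
  have hmem : (φ (⟨w, hw.1⟩, x) : E) ∈ p ⁻¹' t := by rw [mem_preimage, h0]; exact hw.2
  have h2 := Triv.re hψ ⟨(φ (⟨w, hw.1⟩, x) : E), hmem⟩ (by rw [h0]; exact hw.2)
  have h1 : (⟨w, hw.2⟩ : t) = ⟨p ((φ (⟨w, hw.1⟩, x) : E)), by rw [h0]; exact hw.2⟩ :=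
    Subtype.ext h0.symm
  calc (ψ (⟨w, hw.2⟩, gT φ ψ hφ (⟨w, hw⟩, x)) : E)
      = (ψ (⟨p ((φ (⟨w, hw.1⟩, x) : E)), by rw [h0]; exact hw.2⟩,
          (ψ.symm ⟨(φ (⟨w, hw.1⟩, x) : E), hmem⟩).2) : E) := by rw [h1]; rfl
    _ = (φ (⟨w, hw.1⟩, x) : E) := congrArg Subtype.val h2

theorem gS_main (φ : (s × F) ≃ₜ (p ⁻¹' s : Set E)) (ψ : (t × F) ≃ₜ (p ⁻¹' t : Set E))
    (hφ : ∀ (u : s) (x : F), p (φ (u, x)) = (u : B))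
    (hψ : ∀ (u : t) (x : F), p (ψ (u, x)) = (u : B))
    (w : B) (hw : w ∈ s ∩ t) (x : F) :
    (φ (⟨w, hw.1⟩, gS φ ψ hψ (⟨w, hw⟩, x)) : E) = (ψ (⟨w, hw.2⟩, x) : E) := by
  have h0 : p ((ψ (⟨w, hw.2⟩, x) : E)) = w := hψ _ _
  have hmem : (ψ (⟨w, hw.2⟩, x) : E) ∈ p ⁻¹' s := by rw [mem_preimage, h0]; exact hw.1
  have h2 := Triv.re hφ ⟨(ψ (⟨w, hw.2⟩, x) : E), hmem⟩ (by rw [h0]; exact hw.1)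
  have h1 : (⟨w, hw.1⟩ : s) = ⟨p ((ψ (⟨w, hw.2⟩, x) : E)), by rw [h0]; exact hw.1⟩ :=
    Subtype.ext h0.symm
  calc (φ (⟨w, hw.1⟩, gS φ ψ hψ (⟨w, hw⟩, x)) : E)
      = (φ (⟨p ((ψ (⟨w, hw.2⟩, x) : E)), by rw [h0]; exact hw.1⟩,
          (φ.symm ⟨(ψ (⟨w, hw.2⟩, x) : E), hmem⟩).2) : E) := by rw [h1]; rfl
    _ = (ψ (⟨w, hw.2⟩, x) : E) := congrArg Subtype.val h2

theorem gST (φ : (s × F) ≃ₜ (p ⁻¹' s : Set E)) (ψ : (t × F) ≃ₜ (p ⁻¹' t : Set E))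
    (hφ : ∀ (u : s) (x : F), p (φ (u, x)) = (u : B))
    (hψ : ∀ (u : t) (x : F), p (ψ (u, x)) = (u : B))
    (w : B) (hw : w ∈ s ∩ t) (x : F) :
    gS φ ψ hψ (⟨w, hw⟩, gT φ ψ hφ (⟨w, hw⟩, x)) = x := by
  have h3 : (⟨(ψ (⟨w, hw.2⟩, gT φ ψ hφ (⟨w, hw⟩, x)) : E), by
      rw [mem_preimage, hψ]; exact hw.1⟩ : (p ⁻¹' s : Set E)) = φ (⟨w, hw.1⟩, x) :=
    Subtype.ext (gT_main φ ψ hφ hψ w hw x)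
  show (φ.symm ⟨(ψ (⟨w, hw.2⟩, gT φ ψ hφ (⟨w, hw⟩, x)) : E), _⟩).2 = x
  rw [h3, φ.symm_apply_apply]

theorem gTS (φ : (s × F) ≃ₜ (p ⁻¹' s : Set E)) (ψ : (t × F) ≃ₜ (p ⁻¹' t : Set E))
    (hφ : ∀ (u : s) (x : F), p (φ (u, x)) = (u : B))
    (hψ : ∀ (u : t) (x : F), p (ψ (u, x)) = (u : B))
    (w : B) (hw : w ∈ s ∩ t) (x : F) :
    gT φ ψ hφ (⟨w, hw⟩, gS φ ψ hψ (⟨w, hw⟩, x)) = x := by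
  have h3 : (⟨(φ (⟨w, hw.1⟩, gS φ ψ hψ (⟨w, hw⟩, x)) : E), by
      rw [mem_preimage, hφ]; exact hw.2⟩ : (p ⁻¹' t : Set E)) = ψ (⟨w, hw.2⟩, x) :=
    Subtype.ext (gS_main φ ψ hφ hψ w hw x)
  show (ψ.symm ⟨(φ (⟨w, hw.1⟩, gS φ ψ hψ (⟨w, hw⟩, x)) : E), _⟩).2 = x
  rw [h3, ψ.symm_apply_apply]

noncomputable def gFwd (φ : (s × F) ≃ₜ (p ⁻¹' s : Set E)) (ψ : (t × F) ≃ₜ (p ⁻¹' t : Set E))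
    (hφ : ∀ (u : s) (x : F), p (φ (u, x)) = (u : B))
    (ρ : C(B, B)) (hρ1 : ∀ b ∈ t, ρ b ∈ s ∩ t) : ((s ∪ t : Set B) × F) → E := fun z =>
  if h : (z.1 : B) ∈ s then (φ (⟨z.1, h⟩, z.2) : E)
  else (ψ (⟨z.1, z.1.2.resolve_left h⟩,
        gT φ ψ hφ (⟨ρ z.1, hρ1 _ (z.1.2.resolve_left h)⟩, z.2)) : E)

noncomputable def gBwd (φ : (s × F) ≃ₜ (p ⁻¹' s : Set E)) (ψ : (t × F) ≃ₜ (p ⁻¹' t : Set E))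
    (hψ : ∀ (u : t) (x : F), p (ψ (u, x)) = (u : B))
    (ρ : C(B, B)) (hρ1 : ∀ b ∈ t, ρ b ∈ s ∩ t) :
    (p ⁻¹' (s ∪ t) : Set E) → ((s ∪ t : Set B) × F) := fun e =>
  if h : p (e : E) ∈ s then (⟨p e, Or.inl h⟩, (φ.symm ⟨e.1, h⟩).2)
  else (⟨p e, Or.inr (e.2.resolve_left h)⟩,
    gS φ ψ hψ (⟨ρ (p e), hρ1 _ (e.2.resolve_left h)⟩, (ψ.symm ⟨e.1, e.2.resolve_left h⟩).2))

variable (φ : (s × F) ≃ₜ (p ⁻¹' s : Set E)) (ψ : (t × F) ≃ₜ (p ⁻¹' t : Set E))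
  (hφ : ∀ (u : s) (x : F), p (φ (u, x)) = (u : B))
  (hψ : ∀ (u : t) (x : F), p (ψ (u, x)) = (u : B))
  (ρ : C(B, B)) (hρ1 : ∀ b ∈ t, ρ b ∈ s ∩ t) (hρ2 : ∀ b ∈ s ∩ t, ρ b = b)

include hφ hψ in
theorem gFwd_proj (z : ((s ∪ t : Set B) × F)) : p (gFwd φ ψ hφ ρ hρ1 z) = (z.1 : B) := by
  unfold gFwd
  split_ifs with h
  · exact hφ _ _
  · exact hψ _ _

include hφ hψ in
theorem gFwd_mem (z : ((s ∪ t : Set B) × F)) : gFwd φ ψ hφ ρ hρ1 z ∈ p ⁻¹' (s ∪ t) := by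
  rw [mem_preimage, gFwd_proj φ ψ hφ hψ]; exact z.1.2

include hφ hψ in
theorem gLeft (z : ((s ∪ t : Set B) × F)) :
    gBwd φ ψ hψ ρ hρ1 ⟨gFwd φ ψ hφ ρ hρ1 z, gFwd_mem φ ψ hφ hψ ρ hρ1 z⟩ = z := by
  obtain ⟨u, x⟩ := z
  by_cases h : (u : B) ∈ s
  · have hfwd : gFwd φ ψ hφ ρ hρ1 (u, x) = (φ (⟨u, h⟩, x) : E) := dif_pos h
    have hps : p (φ (⟨u, h⟩, x) : E) ∈ s := by rw [hφ]; exact h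
    unfold gBwd
    rw [dif_pos (show p ((⟨gFwd φ ψ hφ ρ hρ1 (u, x), gFwd_mem φ ψ hφ hψ ρ hρ1 (u, x)⟩ :
      (p ⁻¹' (s ∪ t) : Set E)) : E) ∈ s from by simpa [hfwd] using hps)]
    refine Prod.ext (Subtype.ext ?_) ?_
    · show p (gFwd φ ψ hφ ρ hρ1 (u, x)) = (u : B)
      exact gFwd_proj φ ψ hφ hψ ρ hρ1 (u, x)
    · show (φ.symm ⟨gFwd φ ψ hφ ρ hρ1 (u, x), _⟩).2 = x
      have h5 : (⟨gFwd φ ψ hφ ρ hρ1 (u, x), by rw [hfwd]; exact hps⟩ : (p ⁻¹' s : Set E))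
          = φ (⟨u, h⟩, x) := Subtype.ext hfwd
      rw [h5, φ.symm_apply_apply]
  · have hu : (u : B) ∈ t := u.2.resolve_left h
    have hfwd : gFwd φ ψ hφ ρ hρ1 (u, x)
        = (ψ (⟨u, hu⟩, gT φ ψ hφ (⟨ρ u, hρ1 _ hu⟩, x)) : E) := dif_neg h
    have hpt : p (gFwd φ ψ hφ ρ hρ1 (u, x)) = (u : B) := gFwd_proj φ ψ hφ hψ ρ hρ1 (u, x)
    unfold gBwd
    rw [dif_neg (show ¬ p ((⟨gFwd φ ψ hφ ρ hρ1 (u, x), gFwd_mem φ ψ hφ hψ ρ hρ1 (u, x)⟩ :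
      (p ⁻¹' (s ∪ t) : Set E)) : E) ∈ s from by simpa [hpt] using h)]
    refine Prod.ext (Subtype.ext ?_) ?_
    · exact hpt
    · show gS φ ψ hψ (⟨ρ (p (gFwd φ ψ hφ ρ hρ1 (u, x))), _⟩,
        (ψ.symm ⟨gFwd φ ψ hφ ρ hρ1 (u, x), _⟩).2) = x
      have h6 : (⟨gFwd φ ψ hφ ρ hρ1 (u, x), by rw [mem_preimage, hpt]; exact hu⟩ :
          (p ⁻¹' t : Set E)) = ψ (⟨u, hu⟩, gT φ ψ hφ (⟨ρ u, hρ1 _ hu⟩, x)) := Subtype.ext hfwd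
      have h7 : ∀ (hq : ρ (p (gFwd φ ψ hφ ρ hρ1 (u, x))) ∈ s ∩ t),
          (⟨ρ (p (gFwd φ ψ hφ ρ hρ1 (u, x))), hq⟩ : (s ∩ t : Set B))
          = ⟨ρ u, hρ1 _ hu⟩ := fun hq => Subtype.ext (congrArg ρ hpt)
      rw [h7, h6, ψ.symm_apply_apply]
      exact gST φ ψ hφ hψ (ρ u) (hρ1 _ hu) x

include hφ hψ in
theorem gRight (e : (p ⁻¹' (s ∪ t) : Set E)) :
    gFwd φ ψ hφ ρ hρ1 (gBwd φ ψ hψ ρ hρ1 e) = (e : E) := by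
  by_cases h : p (e : E) ∈ s
  · have hbwd : gBwd φ ψ hψ ρ hρ1 e = (⟨p e, Or.inl h⟩, (φ.symm ⟨e.1, h⟩).2) := dif_pos h
    rw [hbwd]
    have : gFwd φ ψ hφ ρ hρ1 (⟨p e, Or.inl h⟩, (φ.symm ⟨e.1, h⟩).2)
        = (φ (⟨p (e : E), h⟩, (φ.symm ⟨e.1, h⟩).2) : E) := dif_pos h
    rw [this]
    exact congrArg Subtype.val (Triv.re hφ ⟨e.1, h⟩ h)
  · have hu : p (e : E) ∈ t := e.2.resolve_left h
    have hbwd : gBwd φ ψ hψ ρ hρ1 e = (⟨p e, Or.inr hu⟩,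
        gS φ ψ hψ (⟨ρ (p e), hρ1 _ hu⟩, (ψ.symm ⟨e.1, hu⟩).2)) := dif_neg h
    rw [hbwd]
    have h2 : gFwd φ ψ hφ ρ hρ1 (⟨p e, Or.inr hu⟩,
        gS φ ψ hψ (⟨ρ (p e), hρ1 _ hu⟩, (ψ.symm ⟨e.1, hu⟩).2))
        = (ψ (⟨p (e : E), hu⟩, gT φ ψ hφ (⟨ρ (p e), hρ1 _ hu⟩,
            gS φ ψ hψ (⟨ρ (p e), hρ1 _ hu⟩, (ψ.symm ⟨e.1, hu⟩).2))) : E) := dif_neg h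
    rw [h2, gTS φ ψ hφ hψ (ρ (p e)) (hρ1 _ hu) ((ψ.symm ⟨e.1, hu⟩).2)]
    exact congrArg Subtype.val (Triv.re hψ ⟨e.1, hu⟩ hu)

include hφ hψ hρ2 in
theorem gBagree (e : E) (h1 : p e ∈ s) (h2 : p e ∈ t) :
    gS φ ψ hψ (⟨ρ (p e), hρ1 _ h2⟩, (ψ.symm ⟨e, h2⟩).2) = (φ.symm ⟨e, h1⟩).2 := by
  have hmk : (⟨ρ (p e), hρ1 _ h2⟩ : (s ∩ t : Set B)) = ⟨p e, ⟨h1, h2⟩⟩ :=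
    Subtype.ext (hρ2 _ ⟨h1, h2⟩)
  rw [hmk]
  have h3 : (⟨(ψ (⟨p e, (⟨h1, h2⟩ : p e ∈ s ∩ t).2⟩, (ψ.symm ⟨e, h2⟩).2) : E), by
      rw [mem_preimage, hψ]; exact h1⟩ : (p ⁻¹' s : Set E)) = ⟨e, h1⟩ := by
    refine Subtype.ext ?_
    show (ψ (⟨p e, h2⟩, (ψ.symm ⟨e, h2⟩).2) : E) = e
    exact congrArg Subtype.val (Triv.re hψ ⟨e, h2⟩ h2)
  exact congrArg (fun a => (φ.symm a).2) h3

include hφ hψ hρ2 in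
theorem gFwd_cont (hs : IsClosed s) (ht : IsClosed t) : Continuous (gFwd φ ψ hφ ρ hρ1) := by
  refine continuous_of_isClosed_cover
    (A₁ := {z : ((s ∪ t : Set B) × F) | (z.1 : B) ∈ s})
    (A₂ := {z : ((s ∪ t : Set B) × F) | (z.1 : B) ∈ t})
    (hs.preimage (continuous_subtype_val.comp continuous_fst))
    (ht.preimage (continuous_subtype_val.comp continuous_fst)) ?_ ?_ ?_
  · ext z; simp only [Set.mem_union, Set.mem_setOf_eq, Set.mem_univ, iff_true]
    exact z.1.2
  · rw [continuousOn_iff_continuous_restrict]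
    have hrestr : Set.domRestrict _ (gFwd φ ψ hφ ρ hρ1) =
        fun (w : {z : ((s ∪ t : Set B) × F) | (z.1 : B) ∈ s}) =>
          (φ (⟨(w.1.1 : B), w.2⟩, w.1.2) : E) := funext fun w => dif_pos w.2
    rw [hrestr]
    have c0 : Continuous fun (w : {z : ((s ∪ t : Set B) × F) | (z.1 : B) ∈ s}) => w.1.1 :=
      continuous_fst.comp continuous_subtype_val
    exact continuous_subtype_val.comp (φ.continuous.comp
      (((continuous_subtype_val.comp c0).subtype_mk _).prodMk
        (continuous_snd.comp continuous_subtype_val)))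
  · rw [continuousOn_iff_continuous_restrict]
    have hrestr : Set.domRestrict _ (gFwd φ ψ hφ ρ hρ1) =
        fun (w : {z : ((s ∪ t : Set B) × F) | (z.1 : B) ∈ t}) =>
          (ψ (⟨(w.1.1 : B), w.2⟩, gT φ ψ hφ (⟨ρ (w.1.1 : B), hρ1 _ w.2⟩, w.1.2)) : E) := by
      funext w
      by_cases hzs : (w.1.1 : B) ∈ s
      · have h8 : Set.domRestrict _ (gFwd φ ψ hφ ρ hρ1) w = (φ (⟨(w.1.1 : B), hzs⟩, w.1.2) : E) :=
          dif_pos hzs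
        rw [h8]
        have hmk : (⟨ρ (w.1.1 : B), hρ1 _ w.2⟩ : (s ∩ t : Set B))
            = ⟨(w.1.1 : B), ⟨hzs, w.2⟩⟩ := Subtype.ext (hρ2 _ ⟨hzs, w.2⟩)
        rw [hmk]
        exact (gT_main φ ψ hφ hψ (w.1.1 : B) ⟨hzs, w.2⟩ w.1.2).symm
      · exact dif_neg hzs
    rw [hrestr]
    have c0 : Continuous fun (w : {z : ((s ∪ t : Set B) × F) | (z.1 : B) ∈ t}) => w.1.1 :=
      continuous_fst.comp continuous_subtype_val
    refine continuous_subtype_val.comp (ψ.continuous.comp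
      (((continuous_subtype_val.comp c0).subtype_mk _).prodMk
        ((gT_cont φ ψ hφ).comp
          (((((map_continuous ρ).comp (continuous_subtype_val.comp c0)).subtype_mk _).prodMk
            (continuous_snd.comp continuous_subtype_val))))))

include hφ hψ hρ2 in
theorem gBwd_cont (hs : IsClosed s) (ht : IsClosed t) : Continuous (gBwd φ ψ hψ ρ hρ1) := by
  refine continuous_of_isClosed_cover
    (A₁ := {e : (p ⁻¹' (s ∪ t) : Set E) | p (e : E) ∈ s})
    (A₂ := {e : (p ⁻¹' (s ∪ t) : Set E) | p (e : E) ∈ t})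
    (hs.preimage ((map_continuous p).comp continuous_subtype_val))
    (ht.preimage ((map_continuous p).comp continuous_subtype_val)) ?_ ?_ ?_
  · ext e; simp only [Set.mem_union, Set.mem_setOf_eq, Set.mem_univ, iff_true]
    exact e.2
  · rw [continuousOn_iff_continuous_restrict]
    have hrestr : Set.domRestrict _ (gBwd φ ψ hψ ρ hρ1) =
        fun (w : {e : (p ⁻¹' (s ∪ t) : Set E) | p (e : E) ∈ s}) =>
          ((⟨p (w.1 : E), Or.inl w.2⟩ : (s ∪ t : Set B)),
            (φ.symm ⟨(w.1 : E), w.2⟩).2) := funext fun w => dif_pos w.2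
    rw [hrestr]
    have c0 : Continuous fun (w : {e : (p ⁻¹' (s ∪ t) : Set E) | p (e : E) ∈ s}) =>
        (w.1 : E) := continuous_subtype_val.comp continuous_subtype_val
    exact (((map_continuous p).comp c0).subtype_mk _).prodMk
      (continuous_snd.comp (φ.symm.continuous.comp (c0.subtype_mk _)))
  · rw [continuousOn_iff_continuous_restrict]
    have hrestr : Set.domRestrict _ (gBwd φ ψ hψ ρ hρ1) =
        fun (w : {e : (p ⁻¹' (s ∪ t) : Set E) | p (e : E) ∈ t}) =>
          ((⟨p (w.1 : E), Or.inr w.2⟩ : (s ∪ t : Set B)),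
            gS φ ψ hψ (⟨ρ (p (w.1 : E)), hρ1 _ w.2⟩, (ψ.symm ⟨(w.1 : E), w.2⟩).2)) := by
      funext w
      by_cases hzs : p (w.1 : E) ∈ s
      · have h8 : Set.domRestrict _ (gBwd φ ψ hψ ρ hρ1) w
            = ((⟨p (w.1 : E), Or.inl hzs⟩ : (s ∪ t : Set B)),
              (φ.symm ⟨(w.1 : E), hzs⟩).2) := dif_pos hzs
        rw [h8]
        refine Prod.ext (Subtype.ext rfl) ?_
        exact (gBagree φ ψ hφ hψ ρ hρ1 hρ2 (w.1 : E) hzs w.2).symm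
      · exact dif_neg hzs
    rw [hrestr]
    have c0 : Continuous fun (w : {e : (p ⁻¹' (s ∪ t) : Set E) | p (e : E) ∈ t}) =>
        (w.1 : E) := continuous_subtype_val.comp continuous_subtype_val
    refine (((map_continuous p).comp c0).subtype_mk _).prodMk
      ((gS_cont φ ψ hψ).comp
        ((((map_continuous ρ).comp ((map_continuous p).comp c0)).subtype_mk _).prodMk
          (continuous_snd.comp (ψ.symm.continuous.comp (c0.subtype_mk _)))))

end

theorem Triv.glue {E B F : Type*} [TopologicalSpace E] [TopologicalSpace B] [TopologicalSpace F]
    {p : C(E, B)} {s t : Set B} (hs : IsClosed s) (ht : IsClosed t)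
    (ρ : C(B, B)) (hρ1 : ∀ b ∈ t, ρ b ∈ s ∩ t) (hρ2 : ∀ b ∈ s ∩ t, ρ b = b)
    (Hs : Triv F p s) (Ht : Triv F p t) : Triv F p (s ∪ t) := by
  obtain ⟨φ, hφ⟩ := Hs
  obtain ⟨ψ, hψ⟩ := Ht
  refine ⟨⟨⟨fun z => ⟨gFwd φ ψ hφ ρ hρ1 z, gFwd_mem φ ψ hφ hψ ρ hρ1 z⟩,
      gBwd φ ψ hψ ρ hρ1, gLeft φ ψ hφ hψ ρ hρ1,
      fun e => Subtype.ext (gRight φ ψ hφ hψ ρ hρ1 e)⟩, ?_, ?_⟩, ?_⟩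
  · exact Continuous.subtype_mk (gFwd_cont φ ψ hφ hψ ρ hρ1 hρ2 hs ht) _
  · exact gBwd_cont φ ψ hφ hψ ρ hρ1 hρ2 hs ht
  · intro u x
    exact gFwd_proj φ ψ hφ hψ ρ hρ1 (u, x)

-- box machinery
def box {m : ℕ} (l u : Fin m → ℝ) : Set (Fin m → unitInterval) :=
  {q | ∀ i, l i ≤ (q i : ℝ) ∧ (q i : ℝ) ≤ u i}

theorem isClosed_box {m : ℕ} (l u : Fin m → ℝ) : IsClosed (box l u) := by
  have h : box l u = ⋂ i, {q : Fin m → unitInterval | l i ≤ (q i : ℝ) ∧ (q i : ℝ) ≤ u i} := by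
    ext q; simp [box, Set.mem_iInter]
  rw [h]
  refine isClosed_iInter fun i => ?_
  rw [Set.setOf_and]
  exact (isClosed_le continuous_const (continuous_subtype_val.comp (continuous_apply i))).inter
    (isClosed_le (continuous_subtype_val.comp (continuous_apply i)) continuous_const)

theorem box_congr {m : ℕ} {l u l' u' : Fin m → ℝ} (hl : ∀ i, l i = l' i)
    (hu : ∀ i, u i = u' i) : box l u = box l' u' := by
  rw [show l = l' from funext hl, show u = u' from funext hu]

set_option maxHeartbeats 1000000 in
theorem triv_univ_of_cube {m : ℕ} {E F : Type*} [TopologicalSpace E] [TopologicalSpace F]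
    (p : C(E, Fin m → unitInterval)) (hp : IsFibreBundleProj F p) : Triv F p Set.univ := by
  classical
  choose U hUo hUmem hUtriv using hp
  obtain ⟨δ, hδ, hball⟩ := lebesgue_number_lemma_of_metric isCompact_univ hUo
    (fun q _ => Set.mem_iUnion.2 ⟨q, hUmem q⟩)
  obtain ⟨N₀, hN₀⟩ := exists_nat_one_div_lt hδ
  set N : ℕ := N₀ + 1 with hN
  have hNpos : 0 < (N : ℝ) := by positivity
  have hNlt : 1 / (N : ℝ) < δ := by
    have : ((N : ℝ)) = (N₀ : ℝ) + 1 := by push_cast [hN]; ring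
    rw [this]; exact hN₀
  have small : ∀ k : Fin m → ℕ,
      Triv F p (box (fun i => (k i : ℝ) / N) (fun i => ((k i : ℝ) + 1) / N)) := by
    intro k
    rcases (box (fun i => (k i : ℝ) / N) (fun i => ((k i : ℝ) + 1) / N)).eq_empty_or_nonempty
      with he | ⟨q₀, hq₀⟩
    · rw [he]
      haveI h1 : IsEmpty (↥(∅ : Set (Fin m → unitInterval))) := Set.isEmpty_coe_sort.mpr rfl
      haveI h2 : IsEmpty ((p ⁻¹' (∅ : Set (Fin m → unitInterval)) : Set E)) :=
        Set.isEmpty_coe_sort.mpr (Set.preimage_empty)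
      refine ⟨⟨Equiv.equivOfIsEmpty _ _,
        continuous_iff_continuousAt.2 (fun x => (IsEmpty.false x).elim),
        continuous_iff_continuousAt.2 (fun x => (IsEmpty.false x).elim)⟩,
        fun u x => (IsEmpty.false u).elim⟩
    · obtain ⟨b, hb⟩ := hball q₀ (Set.mem_univ _)
      refine Triv.mono (hUtriv b) ?_
      intro q hq
      apply hb
      rw [Metric.mem_ball]
      have hd : dist q q₀ ≤ 1 / N := by
        rw [dist_pi_le_iff (by positivity)]
        intro i
        rw [Subtype.dist_eq, Real.dist_eq, abs_sub_le_iff]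
        obtain ⟨ha1, ha2⟩ := hq i
        obtain ⟨hb1, hb2⟩ := hq₀ i
        have hsub : ((k i : ℝ) + 1) / N - (k i : ℝ) / N = 1 / N := by ring
        constructor <;> linarith
      linarith
  have main : ∀ j : ℕ, j ≤ m → ∀ k : Fin m → ℕ,
      Triv F p (box (fun i => if (i : ℕ) < j then (0:ℝ) else (k i : ℝ) / N)
        (fun i => if (i : ℕ) < j then (1:ℝ) else ((k i : ℝ) + 1) / N)) := by
    intro j
    induction j with
    | zero =>
      intro _ k
      have h0 := small k
      rwa [box_congr (l' := fun i => if (i : ℕ) < 0 then (0:ℝ) else (k i : ℝ) / N)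
        (u' := fun i => if (i : ℕ) < 0 then (1:ℝ) else ((k i : ℝ) + 1) / N)
        (fun i => by simp) (fun i => by simp)] at h0
    | succ j ih =>
      intro hj k
      have hjm : j < m := hj
      have inner : ∀ r : ℕ, 1 ≤ r → r ≤ N → Triv F p (box
          (fun i => if (i : ℕ) < j + 1 then (0:ℝ) else (k i : ℝ) / N)
          (fun i => if (i : ℕ) < j then (1:ℝ) else if (i : ℕ) = j then (r : ℝ) / N
            else ((k i : ℝ) + 1) / N)) := by
        intro r hr
        induction r, hr using Nat.le_induction with
        | base =>
          intro _
          have h1 := ih (Nat.le_of_lt hjm) (Function.update k ⟨j, hjm⟩ 0)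
          rwa [box_congr
            (l' := fun i => if (i : ℕ) < j + 1 then (0:ℝ) else (k i : ℝ) / N)
            (u' := fun i => if (i : ℕ) < j then (1:ℝ) else if (i : ℕ) = j then ((1:ℕ) : ℝ) / N
              else ((k i : ℝ) + 1) / N)
            (fun i => ?_) (fun i => ?_)] at h1 <;>
          · rcases lt_trichotomy ((i : ℕ)) j with h|h|h
            · simp [h, Nat.lt_succ_of_lt h]
            · have hiJ : i = ⟨j, hjm⟩ := Fin.ext h
              subst hiJ
              simp
            · have h4 : ¬ (i : ℕ) < j := by omega
              have h5 : ¬ (i : ℕ) < j + 1 := by omega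
              have h6 : ¬ (i : ℕ) = j := by omega
              have hne : i ≠ ⟨j, hjm⟩ := by
                intro hh; subst hh; simp at h
              simp [h4, h5, h6, Function.update_of_ne hne]
        | succ r hr1 ihr =>
          intro hrN
          have hs := ihr (by omega)
          have htt : Triv F p (box
              (fun i => if (i:ℕ) < j then (0:ℝ) else if (i:ℕ) = j then (r:ℝ)/N else (k i:ℝ)/N)
              (fun i => if (i:ℕ) < j then (1:ℝ) else if (i:ℕ) = j then ((r:ℝ)+1)/N
                else ((k i:ℝ)+1)/N)) := by
            have h1 := ih (Nat.le_of_lt hjm) (Function.update k ⟨j, hjm⟩ r)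
            rwa [box_congr
              (l' := fun i => if (i:ℕ) < j then (0:ℝ) else if (i:ℕ) = j then (r:ℝ)/N
                else (k i:ℝ)/N)
              (u' := fun i => if (i:ℕ) < j then (1:ℝ) else if (i:ℕ) = j then ((r:ℝ)+1)/N
                else ((k i:ℝ)+1)/N)
              (fun i => ?_) (fun i => ?_)] at h1 <;>
            · rcases lt_trichotomy ((i : ℕ)) j with h|h|h
              · simp [h]
              · have hiJ : i = ⟨j, hjm⟩ := Fin.ext h
                subst hiJ
                simp
              · have h4 : ¬ (i : ℕ) < j := by omega
                have h6 : ¬ (i : ℕ) = j := by omega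
                have hne : i ≠ ⟨j, hjm⟩ := by
                  intro hh; subst hh; simp at h
                simp [h4, h6, Function.update_of_ne hne]
          -- the clamp map ρ
          have hmemv : ∀ q : Fin m → unitInterval,
              min ((q ⟨j,hjm⟩ : ℝ)) ((r:ℝ)/N) ∈ unitInterval := fun q =>
            ⟨le_min (q ⟨j,hjm⟩).2.1 (by positivity),
              (min_le_left _ _).trans (q ⟨j,hjm⟩).2.2⟩
          set ρ : C(Fin m → unitInterval, Fin m → unitInterval) :=
            ⟨fun q => Function.update q ⟨j,hjm⟩ ⟨min ((q ⟨j,hjm⟩ : ℝ)) ((r:ℝ)/N), hmemv q⟩,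
             continuous_id.update _ (Continuous.subtype_mk
               ((continuous_subtype_val.comp (continuous_apply _)).min continuous_const) _)⟩
            with hρdef
          have hval : ∀ (b : Fin m → unitInterval) (i : Fin m), ((ρ b i : ℝ))
              = if i = ⟨j,hjm⟩ then min ((b ⟨j,hjm⟩ : ℝ)) ((r:ℝ)/N) else (b i : ℝ) := by
            intro b i
            rcases eq_or_ne i ⟨j,hjm⟩ with hh|hh
            · subst hh
              rw [if_pos rfl]
              show ((Function.update b ⟨j,hjm⟩ _ ⟨j,hjm⟩ : unitInterval) : ℝ) = _
              rw [Function.update_self]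
            · rw [if_neg hh]
              show ((Function.update b ⟨j,hjm⟩ _ i : unitInterval) : ℝ) = _
              rw [Function.update_of_ne hh]
          have hρ1 : ∀ b ∈ box
              (fun i => if (i:ℕ) < j then (0:ℝ) else if (i:ℕ) = j then (r:ℝ)/N else (k i:ℝ)/N)
              (fun i => if (i:ℕ) < j then (1:ℝ) else if (i:ℕ) = j then ((r:ℝ)+1)/N
                else ((k i:ℝ)+1)/N),
              ρ b ∈ (box (fun i => if (i : ℕ) < j + 1 then (0:ℝ) else (k i : ℝ) / N)
                  (fun i => if (i : ℕ) < j then (1:ℝ) else if (i : ℕ) = j then (r : ℝ) / N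
                    else ((k i : ℝ) + 1) / N)) ∩ (box
                (fun i => if (i:ℕ) < j then (0:ℝ) else if (i:ℕ) = j then (r:ℝ)/N
                  else (k i:ℝ)/N)
                (fun i => if (i:ℕ) < j then (1:ℝ) else if (i:ℕ) = j then ((r:ℝ)+1)/N
                  else ((k i:ℝ)+1)/N)) := by
            intro b hb
            simp only [box, Set.mem_setOf_eq, Set.mem_inter_iff] at hb ⊢
            have hbJ : (r:ℝ)/N ≤ (b ⟨j,hjm⟩ : ℝ) := by
              have h7 := (hb ⟨j,hjm⟩).1
              simpa using h7
            have hminr : min ((b ⟨j,hjm⟩ : ℝ)) ((r:ℝ)/N) = (r:ℝ)/N := min_eq_right hbJ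
            refine ⟨fun i => ?_, fun i => ?_⟩ <;> rw [hval b i] <;>
              rcases eq_or_ne i ⟨j,hjm⟩ with hh|hh
            · subst hh
              rw [if_pos rfl, hminr]
              simp
              positivity
            · rw [if_neg hh]
              have h3 := hb i
              rcases lt_trichotomy ((i : ℕ)) j with h|h|h
              · have h8 : (i:ℕ) < j + 1 := by omega
                simp only [if_pos h, if_pos h8] at h3 ⊢
                exact h3
              · exact absurd (Fin.ext h) hh
              · have h4 : ¬ (i : ℕ) < j := by omega
                have h5 : ¬ (i : ℕ) < j + 1 := by omega
                have h6 : ¬ (i : ℕ) = j := by omega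
                simp only [if_neg h4, if_neg h5, if_neg h6] at h3 ⊢
                exact h3
            · subst hh
              rw [if_pos rfl, hminr]
              simp
              exact (div_le_div_iff_of_pos_right hNpos).2 (by linarith)
            · rw [if_neg hh]
              exact hb i
          have hρ2 : ∀ b ∈ (box (fun i => if (i : ℕ) < j + 1 then (0:ℝ) else (k i : ℝ) / N)
                  (fun i => if (i : ℕ) < j then (1:ℝ) else if (i : ℕ) = j then (r : ℝ) / N
                    else ((k i : ℝ) + 1) / N)) ∩ (box
                (fun i => if (i:ℕ) < j then (0:ℝ) else if (i:ℕ) = j then (r:ℝ)/N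
                  else (k i:ℝ)/N)
                (fun i => if (i:ℕ) < j then (1:ℝ) else if (i:ℕ) = j then ((r:ℝ)+1)/N
                  else ((k i:ℝ)+1)/N)), ρ b = b := by
            intro b hb
            have h1 : (b ⟨j,hjm⟩ : ℝ) ≤ (r:ℝ)/N := by
              have h7 := (hb.1 ⟨j,hjm⟩).2
              simpa using h7
            funext i
            rcases eq_or_ne i ⟨j,hjm⟩ with hh|hh
            · subst hh
              refine Subtype.ext ?_
              rw [hval]
              rw [if_pos rfl]
              exact min_eq_left h1
            · refine Subtype.ext ?_
              rw [hval, if_neg hh]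
          have hunion : (box (fun i => if (i : ℕ) < j + 1 then (0:ℝ) else (k i : ℝ) / N)
                  (fun i => if (i : ℕ) < j then (1:ℝ) else if (i : ℕ) = j then (r : ℝ) / N
                    else ((k i : ℝ) + 1) / N)) ∪ (box
                (fun i => if (i:ℕ) < j then (0:ℝ) else if (i:ℕ) = j then (r:ℝ)/N
                  else (k i:ℝ)/N)
                (fun i => if (i:ℕ) < j then (1:ℝ) else if (i:ℕ) = j then ((r:ℝ)+1)/N
                  else ((k i:ℝ)+1)/N))
              = box (fun i => if (i : ℕ) < j + 1 then (0:ℝ) else (k i : ℝ) / N)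
                  (fun i => if (i:ℕ) < j then (1:ℝ) else if (i:ℕ) = j then ((r:ℝ)+1)/N
                    else ((k i:ℝ)+1)/N) := by
            ext b
            simp only [box, Set.mem_setOf_eq, Set.mem_union]
            constructor
            · rintro (hb|hb) i
              · rcases lt_trichotomy ((i : ℕ)) j with h|h|h
                · have h8 : (i:ℕ) < j + 1 := by omega
                  have h3 := hb i
                  simp only [if_pos h, if_pos h8] at h3 ⊢
                  exact h3
                · have hiJ : i = ⟨j, hjm⟩ := Fin.ext h
                  subst hiJ
                  have h3 := hb ⟨j, hjm⟩
                  simp only at h3 ⊢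
                  simp at h3 ⊢
                  refine ⟨h3.1, h3.2.trans ((div_le_div_iff_of_pos_right hNpos).2 (by linarith))⟩
                · have h4 : ¬ (i : ℕ) < j := by omega
                  have h5 : ¬ (i : ℕ) < j + 1 := by omega
                  have h6 : ¬ (i : ℕ) = j := by omega
                  have h3 := hb i
                  simp only [if_neg h4, if_neg h5, if_neg h6] at h3 ⊢
                  exact h3
              · rcases lt_trichotomy ((i : ℕ)) j with h|h|h
                · have h8 : (i:ℕ) < j + 1 := by omega
                  have h3 := hb i
                  simp only [if_pos h, if_pos h8] at h3 ⊢
                  exact h3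
                · have hiJ : i = ⟨j, hjm⟩ := Fin.ext h
                  subst hiJ
                  have h3 := hb ⟨j, hjm⟩
                  simp at h3 ⊢
                  refine ⟨?_, h3.2⟩
                  refine le_trans ?_ h3.1
                  positivity
                · have h4 : ¬ (i : ℕ) < j := by omega
                  have h5 : ¬ (i : ℕ) < j + 1 := by omega
                  have h6 : ¬ (i : ℕ) = j := by omega
                  have h3 := hb i
                  simp only [if_neg h4, if_neg h5, if_neg h6] at h3 ⊢
                  exact h3
            · intro hb
              by_cases hc : (b ⟨j,hjm⟩ : ℝ) ≤ (r:ℝ)/N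
              · left
                intro i
                rcases lt_trichotomy ((i : ℕ)) j with h|h|h
                · have h8 : (i:ℕ) < j + 1 := by omega
                  have h3 := hb i
                  simp only [if_pos h, if_pos h8] at h3 ⊢
                  exact h3
                · have hiJ : i = ⟨j, hjm⟩ := Fin.ext h
                  subst hiJ
                  have h3 := hb ⟨j, hjm⟩
                  simp at h3 ⊢
                  exact ⟨h3.1, hc⟩
                · have h4 : ¬ (i : ℕ) < j := by omega
                  have h5 : ¬ (i : ℕ) < j + 1 := by omega
                  have h6 : ¬ (i : ℕ) = j := by omega
                  have h3 := hb i
                  simp only [if_neg h4, if_neg h5, if_neg h6] at h3 ⊢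
                  exact h3
              · right
                intro i
                rcases lt_trichotomy ((i : ℕ)) j with h|h|h
                · have h8 : (i:ℕ) < j + 1 := by omega
                  have h3 := hb i
                  simp only [if_pos h, if_pos h8] at h3 ⊢
                  exact h3
                · have hiJ : i = ⟨j, hjm⟩ := Fin.ext h
                  subst hiJ
                  have h3 := hb ⟨j, hjm⟩
                  simp at h3 ⊢
                  exact ⟨le_of_not_ge hc, h3.2⟩
                · have h4 : ¬ (i : ℕ) < j := by omega
                  have h5 : ¬ (i : ℕ) < j + 1 := by omega
                  have h6 : ¬ (i : ℕ) = j := by omega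
                  have h3 := hb i
                  simp only [if_neg h4, if_neg h5, if_neg h6] at h3 ⊢
                  exact h3
          have hglue := Triv.glue (isClosed_box _ _) (isClosed_box _ _) ρ hρ1 hρ2 hs htt
          rw [hunion] at hglue
          rwa [box_congr
            (l' := fun i => if (i : ℕ) < j + 1 then (0:ℝ) else (k i : ℝ) / N)
            (u' := fun i => if (i : ℕ) < j then (1:ℝ) else if (i : ℕ) = j
              then (((r+1 : ℕ)) : ℝ) / N else ((k i : ℝ) + 1) / N)
            (fun i => rfl) (fun i => by
              beta_reduce
              rcases lt_trichotomy ((i : ℕ)) j with h|h|h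
              · rw [if_pos h, if_pos h]
              · have h4 : ¬ (i : ℕ) < j := by omega
                rw [if_neg h4, if_neg h4, if_pos h, if_pos h]
                push_cast
                ring
              · have h4 : ¬ (i : ℕ) < j := by omega
                have h6 : ¬ (i : ℕ) = j := by omega
                rw [if_neg h4, if_neg h4, if_neg h6, if_neg h6])] at hglue
      have hfin := inner N (by omega) le_rfl
      rwa [box_congr
        (l' := fun i => if (i : ℕ) < j + 1 then (0:ℝ) else (k i : ℝ) / N)
        (u' := fun i => if (i : ℕ) < j + 1 then (1:ℝ) else ((k i : ℝ) + 1) / N)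
        (fun i => rfl) (fun i => ?_)] at hfin
      rcases lt_trichotomy ((i : ℕ)) j with h|h|h
      · have h8 : (i:ℕ) < j + 1 := by omega
        simp [h, h8]
      · have h8 : (i:ℕ) < j + 1 := by omega
        have h4 : ¬ (i : ℕ) < j := by omega
        beta_reduce
        rw [if_neg h4, if_pos h, if_pos h8]
        rw [div_self hNpos.ne']
      · have h4 : ¬ (i : ℕ) < j := by omega
        have h5 : ¬ (i : ℕ) < j + 1 := by omega
        have h6 : ¬ (i : ℕ) = j := by omega
        simp [h4, h5, h6]
  have hfin2 := main m le_rfl (fun _ => 0)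
  have huniv : box (fun i : Fin m => if (i : ℕ) < m then (0:ℝ) else ((0:ℕ) : ℝ) / N)
      (fun i : Fin m => if (i : ℕ) < m then (1:ℝ) else (((0:ℕ) : ℝ) + 1) / N) = Set.univ := by
    rw [Set.eq_univ_iff_forall]
    intro q i
    simp only [if_pos i.isLt]
    exact ⟨(q i).2.1, (q i).2.2⟩
  rwa [huniv] at hfin2

section Pullback
variable {Y E B F : Type*} [TopologicalSpace Y] [TopologicalSpace E] [TopologicalSpace B]
  [TopologicalSpace F]

/-- Total space of the pullback of `p` along `h`. -/
abbrev Pb (p : C(E, B)) (h : C(Y, B)) : Type _ := {z : Y × E // p z.2 = h z.1}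

def pbProj (p : C(E, B)) (h : C(Y, B)) : C(Pb p h, Y) :=
  ⟨fun z => z.1.1, continuous_fst.comp continuous_subtype_val⟩

theorem pb_bundle {p : C(E, B)} (hp : IsFibreBundleProj F p) (h : C(Y, B)) :
    IsFibreBundleProj F (pbProj p h) := by
  intro y
  obtain ⟨U, hUo, hyU, φ, hφ⟩ := hp (h y)
  refine ⟨h ⁻¹' U, hUo.preimage (map_continuous h), hyU, ?_⟩
  have key : ∀ (e : (p ⁻¹' U : Set E)), ((φ.symm e).1 : B) = p e := Triv.key hφ
  refine ⟨⟨⟨fun z => ⟨⟨(z.1.1, (φ (⟨h z.1.1, z.1.2⟩, z.2) : E)), (hφ _ _ : _)⟩,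
      (z.1.2 : h (z.1 : Y) ∈ U)⟩,
    fun w => (⟨w.1.1.1, w.2⟩, (φ.symm ⟨w.1.1.2, show p w.1.1.2 ∈ U by
      rw [w.1.2]; exact w.2⟩).2), ?_, ?_⟩, ?_, ?_⟩, fun u x => rfl⟩
  · rintro ⟨v, x⟩
    refine Prod.ext (Subtype.ext rfl) ?_
    have key2 : ∀ (a : (p ⁻¹' U : Set E)) (hval : (a : E) = (φ (⟨h (v : Y), v.2⟩, x) : E)),
        (φ.symm a).2 = x := by
      intro a hval
      rw [show a = φ (⟨h (v : Y), v.2⟩, x) from Subtype.ext hval, φ.symm_apply_apply]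
    exact key2 _ rfl
  · intro w
    refine Subtype.ext (Subtype.ext (Prod.ext rfl ?_))
    have hw : w.1.1.2 ∈ p ⁻¹' U := by rw [mem_preimage, w.1.2]; exact w.2
    have h1 : (⟨h w.1.1.1, w.2⟩ : U) = ⟨p w.1.1.2, hw⟩ := Subtype.ext w.1.2.symm
    show (φ (⟨h w.1.1.1, w.2⟩, (φ.symm ⟨w.1.1.2, _⟩).2) : E) = w.1.1.2
    rw [h1]
    exact congrArg Subtype.val (Triv.re hφ ⟨w.1.1.2, hw⟩ hw)
  · refine Continuous.subtype_mk (Continuous.subtype_mk (Continuous.prodMk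
      (continuous_subtype_val.comp continuous_fst) ?_) _) _
    exact continuous_subtype_val.comp (φ.continuous.comp
      ((((map_continuous h).comp (continuous_subtype_val.comp continuous_fst)).subtype_mk _).prodMk
        continuous_snd))
  · refine Continuous.prodMk ?_ ?_
    · exact Continuous.subtype_mk
        (continuous_fst.comp (continuous_subtype_val.comp continuous_subtype_val)) _
    · exact continuous_snd.comp (φ.symm.continuous.comp (Continuous.subtype_mk
        (continuous_snd.comp (continuous_subtype_val.comp continuous_subtype_val)) _))

end Pullback

theorem hlp_of_retract {E B Y Y' : Type*} [TopologicalSpace E] [TopologicalSpace B]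
    [TopologicalSpace Y] [TopologicalSpace Y'] (p : C(E, B))
    (ι : C(Y, Y')) (r : C(Y', Y)) (hr : ∀ y, r (ι y) = y)
    (H : HasHLP p Y') : HasHLP p Y := by
  intro f h h0
  obtain ⟨h', hp', h0'⟩ := H (f.comp r)
    (h.comp ⟨fun z => (r z.1, z.2), ((map_continuous r).comp continuous_fst).prodMk
      continuous_snd⟩)
    (fun y' => h0 (r y'))
  refine ⟨h'.comp ⟨fun z => (ι z.1, z.2), ((map_continuous ι).comp continuous_fst).prodMk
    continuous_snd⟩, fun z => ?_, fun y => ?_⟩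
  · have := hp' (ι z.1, z.2)
    simpa [hr] using this
  · have := h0' (ι y)
    simpa [hr] using this

/-- splitting off the last coordinate of a cube -/
def cubeSucc (n : ℕ) : (Fin (n+1) → unitInterval) ≃ₜ (Fin n → unitInterval) × unitInterval where
  toFun q := (fun i => q i.castSucc, q (Fin.last n))
  invFun z := Fin.snoc z.1 z.2
  left_inv q := by
    funext i
    refine Fin.lastCases ?_ ?_ i
    · exact Fin.snoc_last _ _
    · intro i; exact Fin.snoc_castSucc _ _ _
  right_inv z := by
    refine Prod.ext ?_ ?_
    · funext i; simp [Fin.snoc_castSucc]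
    · simp [Fin.snoc_last]
  continuous_toFun := (continuous_pi fun i => continuous_apply _).prodMk (continuous_apply _)
  continuous_invFun := continuous_pi fun i => by
    refine Fin.lastCases ?_ ?_ i
    · simpa only [Fin.snoc_last] using continuous_snd
    · intro i
      simp only [Fin.snoc_castSucc]
      exact (continuous_apply i).comp continuous_fst

theorem hlp_cube {E B F : Type*} [TopologicalSpace E] [TopologicalSpace B] [TopologicalSpace F]
    (p : C(E, B)) (hp : IsFibreBundleProj F p) (n : ℕ) :
    HasHLP p (Fin n → unitInterval) := by
  intro f h h0
  set e := cubeSucc n with he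
  set h₂ : C(Fin (n+1) → unitInterval, B) := h.comp (e : C(Fin (n+1) → unitInterval, (Fin n → unitInterval) × unitInterval)) with hh₂
  have hb := pb_bundle hp h₂
  obtain ⟨ψ, hψ⟩ := triv_univ_of_cube (pbProj p h₂) hb
  have keyψ : ∀ w : (pbProj p h₂ ⁻¹' Set.univ : Set (Pb p h₂)),
      ((ψ.symm w).1 : Fin (n+1) → unitInterval) = pbProj p h₂ w := Triv.key hψ
  -- starting section
  have hsecmem : ∀ y : Fin n → unitInterval,
      p (f y) = h₂ (e.symm (y, 0)) := by
    intro y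
    have : h₂ (e.symm (y, 0)) = h (e (e.symm (y, 0))) := rfl
    rw [this, e.apply_symm_apply]
    exact (h0 y).symm
  set sec : (Fin n → unitInterval) → Pb p h₂ :=
    fun y => ⟨(e.symm (y, 0), f y), hsecmem y⟩ with hsec
  have hseccont : Continuous sec := by
    refine Continuous.subtype_mk (Continuous.prodMk ?_ (map_continuous f)) _
    exact e.symm.continuous.comp (continuous_id.prodMk continuous_const)
  set fib : (Fin n → unitInterval) → F :=
    fun y => (ψ.symm ⟨sec y, Set.mem_univ _⟩).2 with hfib
  have hfibcont : Continuous fib :=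
    continuous_snd.comp (ψ.symm.continuous.comp (hseccont.subtype_mk _))
  refine ⟨⟨fun z => (((ψ (⟨e.symm z, Set.mem_univ _⟩, fib z.1)) : Pb p h₂) : (Fin (n+1) → unitInterval) × E).2, ?_⟩,
    ?_, ?_⟩
  · refine continuous_snd.comp (continuous_subtype_val.comp (continuous_subtype_val.comp ?_))
    refine ψ.continuous.comp (Continuous.prodMk ?_ (hfibcont.comp continuous_fst))
    exact (e.symm.continuous).subtype_mk _
  · intro z
    have h1 := (((ψ (⟨e.symm z, Set.mem_univ _⟩, fib z.1)) : Pb p h₂)).2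
    have h2 : pbProj p h₂ ((ψ (⟨e.symm z, Set.mem_univ _⟩, fib z.1)) : Pb p h₂)
        = e.symm z := hψ _ _
    show p (((ψ (⟨e.symm z, Set.mem_univ _⟩, fib z.1)) : Pb p h₂) : (Fin (n+1) → unitInterval) × E).2 = h z
    rw [h1]
    show h₂ (pbProj p h₂ ((ψ (⟨e.symm z, Set.mem_univ _⟩, fib z.1)) : Pb p h₂)) = h z
    rw [h2]
    show h (e (e.symm z)) = h z
    rw [e.apply_symm_apply]
  · intro y
    have h3 : (ψ.symm ⟨sec y, Set.mem_univ _⟩).1 = ⟨e.symm (y, 0), Set.mem_univ _⟩ := by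
      refine Subtype.ext ?_
      rw [keyψ]
      rfl
    have h4 : ψ (⟨e.symm (y, 0), Set.mem_univ _⟩, fib y) = ⟨sec y, Set.mem_univ _⟩ := by
      rw [← h3, hfib]
      exact ψ.apply_symm_apply _
    show (((ψ (⟨e.symm (y, 0), Set.mem_univ _⟩, fib y)) : Pb p h₂) : (Fin (n+1) → unitInterval) × E).2 = f y
    rw [h4]

set_option maxHeartbeats 1000000 in
theorem coord_abs_le_norm {n : ℕ} (x : EuclideanSpace ℝ (Fin n)) (i : Fin n) :
    |x i| ≤ ‖x‖ := by
  have h1 : |x i| ^ 2 ≤ ∑ j, ‖x j‖ ^ 2 := by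
    have h2 := Finset.single_le_sum (f := fun j => ‖x j‖ ^ 2)
      (fun j _ => sq_nonneg _) (Finset.mem_univ i)
    simpa [Real.norm_eq_abs] using h2
  have h0 : |x i| ^ 2 = x i ^ 2 := sq_abs _
  calc |x i| = Real.sqrt (|x i| ^ 2) := by rw [h0]; exact (Real.sqrt_sq_eq_abs _).symm
    _ ≤ Real.sqrt (∑ j, ‖x j‖ ^ 2) := Real.sqrt_le_sqrt h1
    _ = ‖x‖ := (EuclideanSpace.norm_eq x).symm

noncomputable def diskToCube (n : ℕ) : C(Disk n, Fin n → unitInterval) :=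
  ⟨fun x i => ⟨((x : EuclideanSpace ℝ (Fin n)) i + 1) / 2, by
    have hx : ‖(x : EuclideanSpace ℝ (Fin n))‖ ≤ 1 := by
      have := x.2
      rwa [Metric.mem_closedBall, dist_zero_right] at this
    have habs := (coord_abs_le_norm (x : EuclideanSpace ℝ (Fin n)) i).trans hx
    rw [abs_le] at habs
    constructor <;> [linarith [habs.1]; linarith [habs.2]]⟩,
   continuous_pi fun i => Continuous.subtype_mk
     ((((EuclideanSpace.proj (𝕜 := ℝ) i).continuous.comp continuous_subtype_val).add
       continuous_const).div_const 2) _⟩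

noncomputable def cubeToDisk (n : ℕ) : C(Fin n → unitInterval, Disk n) := by
  have ycont : Continuous (fun q : Fin n → unitInterval =>
      ((EuclideanSpace.equiv (Fin n) ℝ).symm (fun i => 2 * ((q i : ℝ)) - 1))) :=
    (EuclideanSpace.equiv (Fin n) ℝ).symm.continuous.comp (continuous_pi fun i =>
      ((continuous_const.mul (continuous_subtype_val.comp (continuous_apply i))).sub
        continuous_const))
  refine ⟨fun q => ⟨(max 1 ‖((EuclideanSpace.equiv (Fin n) ℝ).symm
      (fun i => 2 * ((q i : ℝ)) - 1))‖)⁻¹ • ((EuclideanSpace.equiv (Fin n) ℝ).symm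
      (fun i => 2 * ((q i : ℝ)) - 1)), ?_⟩, ?_⟩
  · set y := ((EuclideanSpace.equiv (Fin n) ℝ).symm (fun i => 2 * ((q i : ℝ)) - 1))
    have hm : (0:ℝ) < max 1 ‖y‖ := lt_of_lt_of_le one_pos (le_max_left _ _)
    rw [mem_closedBall_zero_iff, norm_smul, norm_inv, Real.norm_eq_abs, abs_of_pos hm,
      ← div_eq_inv_mul, div_le_one hm]
    exact le_max_right _ _
  · refine Continuous.subtype_mk (Continuous.fun_smul ?_ ycont) _
    exact Continuous.inv₀ (continuous_const.max ycont.norm)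
      (fun q => (lt_of_lt_of_le one_pos (le_max_left _ _)).ne')

theorem cubeToDisk_diskToCube (n : ℕ) (x : Disk n) :
    cubeToDisk n (diskToCube n x) = x := by
  refine Subtype.ext ?_
  have hy : ((EuclideanSpace.equiv (Fin n) ℝ).symm
      (fun i => 2 * (((diskToCube n x) i : ℝ)) - 1)) = (x : EuclideanSpace ℝ (Fin n)) := by
    ext i
    show 2 * (((x : EuclideanSpace ℝ (Fin n)) i + 1) / 2) - 1 = (x : EuclideanSpace ℝ (Fin n)) i
    ring
  show (max 1 ‖((EuclideanSpace.equiv (Fin n) ℝ).symm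
      (fun i => 2 * (((diskToCube n x) i : ℝ)) - 1))‖)⁻¹ • ((EuclideanSpace.equiv (Fin n) ℝ).symm
      (fun i => 2 * (((diskToCube n x) i : ℝ)) - 1)) = (x : EuclideanSpace ℝ (Fin n))
  rw [hy]
  have hx : ‖(x : EuclideanSpace ℝ (Fin n))‖ ≤ 1 := by
    have := x.2
    rwa [Metric.mem_closedBall, dist_zero_right] at this
  rw [max_eq_left hx, inv_one, one_smul]


end

/-- The projection of a fibre bundle is a weak fibration: it has the homotopy lifting
property with respect to every disk `Dⁿ`, `n ≥ 0`. -/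
theorem fibreBundle_isWeakFibration
    {E B : Type u} (F : Type u) [TopologicalSpace E] [TopologicalSpace B] [TopologicalSpace F]
    (p : C(E, B)) (hp : IsFibreBundleProj F p) :
    ∀ n : ℕ, HasHLP p (Disk n) := by
  intro n
  exact hlp_of_retract p (diskToCube n) (cubeToDisk n) (cubeToDisk_diskToCube n)
    (hlp_cube p hp n)
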